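/- Let G be a locally compact abelian group, let ω ≥ 1 and σ be weights on G, let X be a symmetric Banach L^1_σ(G)-module, and let I_0 = {f ∈ L^1_ω(G) : ∫_G f(t)dt = 0} be the augmentation ideal of L^1_ω(G). Let ι⊗id_X : I_0 ⊗̂ X → L^1_ω(G) ⊗̂ X be the norm-decreasing operator induced by the inclusion ι: I_0 → L^1_ω(G). Then ι⊗id_X is a bicontinuous algebraic isomorphism from I_0 ⊗̂ X onto ker φ^X_ω, where φ^X_ω : L^1_ω(G) ⊗̂ X → X is the operator determined by φ^X_ω(f⊗x) = (∫_G f(t)dt)·x. -/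

import Mathlib

/-! The augmentation character has the right inverse `c ↦ c • e`, where `e` is a multiple
of the indicator of a nonempty relatively compact open set with `∫ e = 1`; hence `I₀` is
complemented in `L¹_ω(G)` by the projection `r f = f - (∫ f) • e`. The universal property turns `r ⊗ id_X` into an operator
`P : L¹_ω(G) ⊗̂ X → I₀ ⊗̂ X` with `P ∘ (ι ⊗ id_X) = id` and
`(ι ⊗ id_X) ∘ P + (e ⊗ ·) ∘ φ^X_ω = id`. The first identity makes `ι ⊗ id_X` injective and
bounded below, the second shows that its range is all of `ker φ^X_ω`. -/

open MeasureTheory ENNReal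

noncomputable section

universe u

/-- The weighted measure associated to a measure `μ` and a weight `ω`. -/
def weightedMeasure {G : Type*} [MeasurableSpace G] (μ : Measure G) (ω : G → ℝ) : Measure G :=
  μ.withDensity fun t => ENNReal.ofReal (ω t)

theorem absolutelyContinuous_weightedMeasure {G : Type*} [MeasurableSpace G] (μ : Measure G)
    {ω : G → ℝ} (hω_meas : Measurable ω) (hω_pos : ∀ t, 0 < ω t) :
    μ ≪ weightedMeasure μ ω :=
  withDensity_absolutelyContinuous' (measurable_ofReal.comp hω_meas).aemeasurable
    (.of_forall fun t => (ofReal_pos.mpr (hω_pos t)).ne')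

theorem exists_Lp_integral_ne_zero {G E : Type*} [TopologicalSpace G] [LocallyCompactSpace G]
    [Nonempty G] [MeasurableSpace G] [OpensMeasurableSpace G]
    [NormedAddCommGroup E] [NormedSpace ℝ E] [CompleteSpace E] [Nontrivial E]
    (μ ν : Measure G) [μ.IsOpenPosMeasure] [IsFiniteMeasureOnCompacts μ]
    [IsFiniteMeasureOnCompacts ν] (hμν : μ ≪ ν) :
    ∃ f : Lp E 1 ν, ∫ t, f t ∂μ ≠ 0 := by
  obtain ⟨x⟩ := ‹Nonempty G›
  obtain ⟨c, hc⟩ := exists_ne (0 : E)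
  obtain ⟨K, hK, hKx⟩ := exists_compact_mem_nhds x
  have hU_meas : MeasurableSet (interior K) := isOpen_interior.measurableSet
  have hμU : μ (interior K) ≠ ∞ :=
    ((measure_mono interior_subset).trans_lt hK.measure_lt_top).ne
  have hνU : ν (interior K) ≠ ∞ :=
    ((measure_mono interior_subset).trans_lt hK.measure_lt_top).ne
  have hμU_pos : 0 < μ (interior K) :=
    isOpen_interior.measure_pos μ ⟨x, mem_interior_iff_mem_nhds.mpr hKx⟩
  refine ⟨indicatorConstLp 1 hU_meas hνU c, ?_⟩
  rw [integral_congr_ae (hμν.ae_eq indicatorConstLp_coeFn), integral_indicator_const c hU_meas]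
  exact smul_ne_zero (ENNReal.toReal_pos hμU_pos.ne' hμU).ne' hc

section Splitting

variable {𝕜 T T' X : Type*} [NontriviallyNormedField 𝕜]
  [NormedAddCommGroup T] [NormedSpace 𝕜 T] [NormedAddCommGroup T'] [NormedSpace 𝕜 T']
  [NormedAddCommGroup X] [NormedSpace 𝕜 X]

theorem ContinuousLinearMap.exists_norm_le_mul_norm_of_leftInverse {j : T' →L[𝕜] T}
    {P : T →L[𝕜] T'} (hPj : Function.LeftInverse P j) :
    ∃ c : ℝ, 0 < c ∧ ∀ u, ‖u‖ ≤ c * ‖j u‖ := by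
  refine ⟨‖P‖ + 1, by positivity, fun u => ?_⟩
  calc ‖u‖ = ‖P (j u)‖ := by rw [hPj]
    _ ≤ ‖P‖ * ‖j u‖ := P.le_opNorm _
    _ ≤ (‖P‖ + 1) * ‖j u‖ := by gcongr; linarith

theorem ContinuousLinearMap.range_eq_ker_of_split {j : T' →L[𝕜] T} {q : T →L[𝕜] X}
    {P : T →L[𝕜] T'} {s : X →L[𝕜] T} (hqj : ∀ u, q (j u) = 0)
    (hsplit : ∀ u, j (P u) + s (q u) = u) :
    Set.range j = {u | q u = 0} := by
  ext u
  refine ⟨?_, fun hu => ⟨P u, ?_⟩⟩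
  · rintro ⟨v, rfl⟩
    exact hqj v
  · have hu : q u = 0 := hu
    simpa [hu] using hsplit u

end Splitting

section ProjectiveTensor

variable {𝕜 E X T T' : Type*} [NontriviallyNormedField 𝕜]
  [NormedAddCommGroup E] [NormedSpace 𝕜 E] [NormedAddCommGroup X] [NormedSpace 𝕜 X]
  [NormedAddCommGroup T] [NormedSpace 𝕜 T] [NormedAddCommGroup T'] [NormedSpace 𝕜 T']
  {φ : E →L[𝕜] 𝕜} {tmul : E →L[𝕜] X →L[𝕜] T}
  {tmul' : LinearMap.ker (φ : E →ₗ[𝕜] 𝕜) →L[𝕜] X →L[𝕜] T'} {j : T' →L[𝕜] T}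

theorem leftInverse_of_tmul_projKerOfRightInverse {s : 𝕜 →L[𝕜] E}
    (hs : Function.RightInverse s φ)
    (hT'_dense : Dense (Submodule.span 𝕜
      (Set.range fun p : LinearMap.ker (φ : E →ₗ[𝕜] 𝕜) × X => tmul' p.1 p.2) : Set T'))
    (hj : ∀ f x, j (tmul' f x) = tmul f x) {P : T →L[𝕜] T'}
    (hP : ∀ f x, P (tmul f x) = tmul' (φ.projKerOfRightInverse s hs f) x) :
    Function.LeftInverse P j := by
  suffices P.comp j = ContinuousLinearMap.id 𝕜 T' from fun u => DFunLike.congr_fun this u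
  refine ContinuousLinearMap.ext_on hT'_dense ?_
  rintro _ ⟨⟨f, x⟩, rfl⟩
  simp only [ContinuousLinearMap.comp_apply, ContinuousLinearMap.id_apply, hj, hP,
    φ.projKerOfRightInverse_apply_idem s hs f]

theorem apply_eq_zero_of_tmul_ker
    (hT'_dense : Dense (Submodule.span 𝕜
      (Set.range fun p : LinearMap.ker (φ : E →ₗ[𝕜] 𝕜) × X => tmul' p.1 p.2) : Set T'))
    (hj : ∀ f x, j (tmul' f x) = tmul f x) {φT : T →L[𝕜] X}
    (hφT : ∀ f x, φT (tmul f x) = φ f • x) (u : T') :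
    φT (j u) = 0 := by
  suffices φT.comp j = 0 from DFunLike.congr_fun this u
  refine ContinuousLinearMap.ext_on hT'_dense ?_
  rintro _ ⟨⟨f, x⟩, rfl⟩
  have hf : φ f = 0 := f.2
  simp only [ContinuousLinearMap.comp_apply, zero_apply, hj, hφT, hf, zero_smul]

theorem add_tmul_projKerOfRightInverse {s : 𝕜 →L[𝕜] E} (hs : Function.RightInverse s φ)
    (hT_dense : Dense (Submodule.span 𝕜
      (Set.range fun p : E × X => tmul p.1 p.2) : Set T))
    (hj : ∀ f x, j (tmul' f x) = tmul f x) {φT : T →L[𝕜] X}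
    (hφT : ∀ f x, φT (tmul f x) = φ f • x) {P : T →L[𝕜] T'}
    (hP : ∀ f x, P (tmul f x) = tmul' (φ.projKerOfRightInverse s hs f) x) (u : T) :
    j (P u) + tmul (s 1) (φT u) = u := by
  suffices j.comp P + (tmul (s 1)).comp φT = ContinuousLinearMap.id 𝕜 T from
    DFunLike.congr_fun this u
  refine ContinuousLinearMap.ext_on hT_dense ?_
  rintro _ ⟨⟨f, x⟩, rfl⟩
  have hsf : s (φ f) = φ f • s 1 := by rw [← map_smul, smul_eq_mul, mul_one]
  simp only [add_apply, ContinuousLinearMap.comp_apply, ContinuousLinearMap.id_apply, hP, hj,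
    hφT, φ.coe_projKerOfRightInverse_apply, hsf, map_sub, map_smul, sub_apply, smul_apply]
  abel

end ProjectiveTensor

theorem stmt_7_general
    {G : Type*} [CommGroup G] [TopologicalSpace G]
    [LocallyCompactSpace G] [MeasurableSpace G] [BorelSpace G]
    (μ : Measure G) [μ.IsHaarMeasure]
    (ω : G → ℝ) (hω_cont : Continuous ω) (hω_pos : ∀ t, 0 < ω t)
    {X : Type*} [NormedAddCommGroup X] [NormedSpace ℂ X]
    -- the augmentation character of `L¹_ω(G)`, whose kernel is the augmentation ideal `I₀`
    (aug : Lp ℂ 1 (weightedMeasure μ ω) →L[ℂ] ℂ)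
    (haug : ∀ f, aug f = ∫ t, f t ∂μ)
    -- `T` is the projective tensor product `L¹_ω(G) ⊗̂ X`
    {T : Type u} [NormedAddCommGroup T] [NormedSpace ℂ T]
    (tmul : Lp ℂ 1 (weightedMeasure μ ω) →L[ℂ] X →L[ℂ] T)
    (hT_dense : Dense (Submodule.span ℂ
      (Set.range fun p : Lp ℂ 1 (weightedMeasure μ ω) × X => tmul p.1 p.2) : Set T))
    (hT_univ : ∀ (Y : Type u) (_ : NormedAddCommGroup Y), ∀ (_ : NormedSpace ℂ Y),
      ∀ b : Lp ℂ 1 (weightedMeasure μ ω) →L[ℂ] X →L[ℂ] Y,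
        ∃ B : T →L[ℂ] Y, ‖B‖ ≤ ‖b‖ ∧ ∀ f x, B (tmul f x) = b f x)
    -- `T'` is the projective tensor product `I₀ ⊗̂ X`
    {T' : Type u} [NormedAddCommGroup T'] [NormedSpace ℂ T']
    (tmul' : ↥(LinearMap.ker (aug : Lp ℂ 1 (weightedMeasure μ ω) →ₗ[ℂ] ℂ)) →L[ℂ] X →L[ℂ] T')
    (hT'_dense : Dense (Submodule.span ℂ
      (Set.range fun p : ↥(LinearMap.ker (aug : Lp ℂ 1 (weightedMeasure μ ω) →ₗ[ℂ] ℂ)) × X => tmul' p.1 p.2) : Set T'))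
    -- the operator `ι ⊗ id_X : I₀ ⊗̂ X → L¹_ω(G) ⊗̂ X` induced by the inclusion
    (j : T' →L[ℂ] T)
    (hj : ∀ (f : ↥(LinearMap.ker (aug : Lp ℂ 1 (weightedMeasure μ ω) →ₗ[ℂ] ℂ))) (x : X), j (tmul' f x) = tmul (↑f) x)
    -- the operator `φ^X_ω : L¹_ω(G) ⊗̂ X → X`
    (φT : T →L[ℂ] X)
    (hφT : ∀ f x, φT (tmul f x) = (∫ t, f t ∂μ) • x) :
    -- conclusion: `ι ⊗ id_X` is a bicontinuous algebraic isomorphism onto `ker φ^X_ω`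
    Function.Injective j ∧
    Set.range j = {u : T | φT u = 0} ∧
    (∃ c : ℝ, 0 < c ∧ ∀ u : T', ‖u‖ ≤ c * ‖j u‖) := by
  have : IsLocallyFiniteMeasure (weightedMeasure μ ω) := .withDensity_ofReal hω_cont
  obtain ⟨f₀, hf₀⟩ : ∃ f₀, aug f₀ ≠ 0 := by
    simpa only [haug] using exists_Lp_integral_ne_zero μ (weightedMeasure μ ω)
      (absolutelyContinuous_weightedMeasure μ hω_cont.measurable hω_pos)
  set s := ContinuousLinearMap.toSpanSingleton ℂ ((aug f₀)⁻¹ • f₀)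
  have hs : Function.RightInverse s aug := fun c => by simp [s, hf₀]
  obtain ⟨P, -, hP⟩ := hT_univ T' inferInstance inferInstance
    (tmul'.comp (aug.projKerOfRightInverse s hs))
  have hφT' : ∀ f x, φT (tmul f x) = aug f • x := fun f x => by rw [hφT, haug]
  have hPj := leftInverse_of_tmul_projKerOfRightInverse hs hT'_dense hj hP
  exact ⟨hPj.injective,
    ContinuousLinearMap.range_eq_ker_of_split (apply_eq_zero_of_tmul_ker hT'_dense hj hφT')
      (add_tmul_projKerOfRightInverse hs hT_dense hj hφT' hP),
    ContinuousLinearMap.exists_norm_le_mul_norm_of_leftInverse hPj⟩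

/-- Let `G` be a locally compact abelian group, `ω ≥ 1` and `σ` weights on
`G`, `X` a symmetric Banach `L¹_σ(G)`-module, and `I₀ = ker (f ↦ ∫ f dλ)` the augmentation
ideal of `L¹_ω(G)`.  Then the norm-decreasing operator
`ι ⊗ id_X : I₀ ⊗̂ X → L¹_ω(G) ⊗̂ X` induced by the inclusion is a bicontinuous algebraic
isomorphism from `I₀ ⊗̂ X` onto `ker φ^X_ω`, where `φ^X_ω (f ⊗ x) = (∫ f dλ) • x`. -/
theorem stmt_7
    {G : Type*} [CommGroup G] [TopologicalSpace G] [IsTopologicalGroup G]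
    [LocallyCompactSpace G] [T2Space G] [MeasurableSpace G] [BorelSpace G]
    (μ : Measure G) [μ.IsHaarMeasure]
    (ω : G → ℝ) (hω_cont : Continuous ω) (hω_pos : ∀ t, 0 < ω t)
    (hω_sub : ∀ s t, ω (s * t) ≤ ω s * ω t) (hω_one : ω 1 = 1) (hω_ge : ∀ t, 1 ≤ ω t)
    (σ : G → ℝ) (hσ_cont : Continuous σ) (hσ_pos : ∀ t, 0 < σ t)
    (hσ_sub : ∀ s t, σ (s * t) ≤ σ s * σ t) (hσ_one : σ 1 = 1)
    -- the convolution algebra `L¹_σ(G)`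
    (convσ : Lp ℂ 1 (weightedMeasure μ σ) →L[ℂ] Lp ℂ 1 (weightedMeasure μ σ) →L[ℂ]
        Lp ℂ 1 (weightedMeasure μ σ))
    (hconvσ : ∀ f g, (convσ f g : G → ℂ) =ᵐ[μ] fun s => ∫ t, f t * g (t⁻¹ * s) ∂μ)
    -- `X` is a symmetric Banach `L¹_σ(G)`-module
    {X : Type*} [NormedAddCommGroup X] [NormedSpace ℂ X] [CompleteSpace X]
    (act : Lp ℂ 1 (weightedMeasure μ σ) →L[ℂ] X →L[ℂ] X)
    (hact_assoc : ∀ f g x, act (convσ f g) x = act f (act g x))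
    (hact_norm : ∀ f x, ‖act f x‖ ≤ ‖f‖ * ‖x‖)
    -- the augmentation character of `L¹_ω(G)`, whose kernel is the augmentation ideal `I₀`
    (aug : Lp ℂ 1 (weightedMeasure μ ω) →L[ℂ] ℂ)
    (haug : ∀ f, aug f = ∫ t, f t ∂μ)
    -- `T` is the projective tensor product `L¹_ω(G) ⊗̂ X`
    {T : Type u} [NormedAddCommGroup T] [NormedSpace ℂ T] [CompleteSpace T]
    (tmul : Lp ℂ 1 (weightedMeasure μ ω) →L[ℂ] X →L[ℂ] T)
    (hT_norm : ∀ f x, ‖tmul f x‖ = ‖f‖ * ‖x‖)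
    (hT_dense : Dense (Submodule.span ℂ
      (Set.range fun p : Lp ℂ 1 (weightedMeasure μ ω) × X => tmul p.1 p.2) : Set T))
    (hT_univ : ∀ (Y : Type u) (_ : NormedAddCommGroup Y), ∀ (_ : NormedSpace ℂ Y),
      ∀ b : Lp ℂ 1 (weightedMeasure μ ω) →L[ℂ] X →L[ℂ] Y,
        ∃ B : T →L[ℂ] Y, ‖B‖ ≤ ‖b‖ ∧ ∀ f x, B (tmul f x) = b f x)
    -- `T'` is the projective tensor product `I₀ ⊗̂ X`
    {T' : Type u} [NormedAddCommGroup T'] [NormedSpace ℂ T'] [CompleteSpace T']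
    (tmul' : ↥(LinearMap.ker (aug : Lp ℂ 1 (weightedMeasure μ ω) →ₗ[ℂ] ℂ)) →L[ℂ] X →L[ℂ] T')
    (hT'_norm : ∀ f x, ‖tmul' f x‖ = ‖f‖ * ‖x‖)
    (hT'_dense : Dense (Submodule.span ℂ
      (Set.range fun p : ↥(LinearMap.ker (aug : Lp ℂ 1 (weightedMeasure μ ω) →ₗ[ℂ] ℂ)) × X => tmul' p.1 p.2) : Set T'))
    (hT'_univ : ∀ (Y : Type u) (_ : NormedAddCommGroup Y), ∀ (_ : NormedSpace ℂ Y),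
      ∀ b : ↥(LinearMap.ker (aug : Lp ℂ 1 (weightedMeasure μ ω) →ₗ[ℂ] ℂ)) →L[ℂ] X →L[ℂ] Y,
        ∃ B : T' →L[ℂ] Y, ‖B‖ ≤ ‖b‖ ∧ ∀ f x, B (tmul' f x) = b f x)
    -- the operator `ι ⊗ id_X : I₀ ⊗̂ X → L¹_ω(G) ⊗̂ X` induced by the inclusion
    (j : T' →L[ℂ] T)
    (hj : ∀ (f : ↥(LinearMap.ker (aug : Lp ℂ 1 (weightedMeasure μ ω) →ₗ[ℂ] ℂ))) (x : X), j (tmul' f x) = tmul (↑f) x)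
    (hj_norm : ∀ u, ‖j u‖ ≤ ‖u‖)
    -- the operator `φ^X_ω : L¹_ω(G) ⊗̂ X → X`
    (φT : T →L[ℂ] X)
    (hφT : ∀ f x, φT (tmul f x) = (∫ t, f t ∂μ) • x) :
    -- conclusion: `ι ⊗ id_X` is a bicontinuous algebraic isomorphism onto `ker φ^X_ω`
    Function.Injective j ∧
    Set.range j = {u : T | φT u = 0} ∧
    (∃ c : ℝ, 0 < c ∧ ∀ u : T', ‖u‖ ≤ c * ‖j u‖) :=
  stmt_7_general μ ω hω_cont hω_pos aug haug tmul hT_dense hT_univ tmul' hT'_dense j hj φT hφT
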